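/- For m, n ≥ 4, in the line graph L(M_{m,n}) of the generalized Möbius ladder, the number of edges with one endpoint of degree 4 and the other of degree 5 equals 4(m−1). -/

import Mathlib

/-- Directed base relation for the generalized Möbius ladder `M_{m,n}`:
columns are indexed by `ZMod (m-1)` (the end columns of the grid `P_m × P_n`
are identified with a half twist), rows by `Fin n`. -/
def gmlRel (m n : ℕ) (v w : ZMod (m - 1) × Fin n) : Prop :=
  -- vertical edge within a column
  (v.1 = w.1 ∧ v.2.val + 1 = w.2.val) ∨
  -- ordinary horizontal edge to the next column
  (v.1 ≠ ((m - 2 : ℕ) : ZMod (m - 1)) ∧ w.1 = v.1 + 1 ∧ v.2 = w.2) ∨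
  -- twisted horizontal edge from the last column back to the first
  (v.1 = ((m - 2 : ℕ) : ZMod (m - 1)) ∧ w.1 = 0 ∧ v.2.val + w.2.val = n - 1)

/-- The generalized Möbius ladder `M_{m,n}`. -/
def GML (m n : ℕ) : SimpleGraph (ZMod (m - 1) × Fin n) :=
  SimpleGraph.fromRel (gmlRel m n)

/-- Degree of a vertex, defined via `Set.ncard` so that no `Fintype`
instances are needed. -/
noncomputable def ndeg {V : Type*} (G : SimpleGraph V) (v : V) : ℕ :=
  (G.neighborSet v).ncard

/-- row flip -/
def sig {n : ℕ} (j : Fin n) : Fin n := ⟨n - 1 - j.val, by omega⟩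

/-- row of the forward horizontal neighbor -/
def fr {m n : ℕ} (i : ZMod (m-1)) (j : Fin n) : Fin n := if i = -1 then sig j else j
/-- row of the backward horizontal neighbor -/
def br {m n : ℕ} (i : ZMod (m-1)) (j : Fin n) : Fin n := if i = 0 then sig j else j

section prelim
variable {m n : ℕ}

lemma last_col (hm : 4 ≤ m) : ((m - 2 : ℕ) : ZMod (m - 1)) = -1 := by
  have h : (m - 2 : ℕ) + 1 = m - 1 := by omega
  have h2 : ((m - 2 + 1 : ℕ) : ZMod (m - 1)) = 0 := by rw [h]; exact ZMod.natCast_self _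
  push_cast at h2
  linear_combination h2

lemma two_ne (hm : 4 ≤ m) : (2 : ZMod (m-1)) ≠ 0 := by
  haveI : NeZero (m-1) := ⟨by omega⟩
  intro h
  have h2 : ((2:ℕ) : ZMod (m-1)) = 0 := by exact_mod_cast h
  rw [ZMod.natCast_eq_zero_iff] at h2
  exact absurd (Nat.le_of_dvd (by norm_num) h2) (by omega)

lemma one_ne (hm : 4 ≤ m) : (1 : ZMod (m-1)) ≠ 0 := by
  haveI : NeZero (m-1) := ⟨by omega⟩
  intro h
  have h2 : ((1:ℕ) : ZMod (m-1)) = 0 := by exact_mod_cast h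
  rw [ZMod.natCast_eq_zero_iff] at h2
  exact absurd (Nat.le_of_dvd (by norm_num) h2) (by omega)

lemma mem_nbhd (hm : 4 ≤ m) (i : ZMod (m-1)) (j : Fin n) (w : ZMod (m-1) × Fin n) :
    w ∈ (GML m n).neighborSet (i, j) ↔
      (w.1 = i ∧ (w.2.val = j.val + 1 ∨ w.2.val + 1 = j.val)) ∨
      (w = (i + 1, fr i j)) ∨ (w = (i - 1, br i j)) := by
  obtain ⟨ic, jc⟩ := w
  simp only [SimpleGraph.neighborSet, SimpleGraph.fromRel_adj, GML, Set.mem_setOf_eq,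
    gmlRel, last_col hm] at *
  constructor
  · rintro ⟨hne, h | h⟩
    · rcases h with ⟨h1, h2⟩ | ⟨h1, h2, h3⟩ | ⟨h1, h2, h3⟩
      · exact Or.inl ⟨h1.symm, Or.inl h2.symm⟩
      · refine Or.inr (Or.inl ?_)
        simp only [Prod.mk.injEq]
        refine ⟨h2, ?_⟩
        rw [fr, if_neg h1, h3]
      · refine Or.inr (Or.inl ?_)
        simp only [Prod.mk.injEq]
        constructor
        · rw [h2, h1]; ring
        · rw [fr, if_pos h1, sig]
          apply Fin.ext; simp; omega
    · rcases h with ⟨h1, h2⟩ | ⟨h1, h2, h3⟩ | ⟨h1, h2, h3⟩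
      · exact Or.inl ⟨h1, Or.inr h2⟩
      · refine Or.inr (Or.inr ?_)
        simp only [Prod.mk.injEq]
        constructor
        · rw [h2]; ring
        · rw [br, if_neg, h3]
          intro h0
          rw [h0] at h2
          exact h1 (by linear_combination -h2)
      · refine Or.inr (Or.inr ?_)
        simp only [Prod.mk.injEq]
        refine ⟨by rw [h2, h1]; ring, ?_⟩
        rw [br, if_pos h2, sig]
        apply Fin.ext; simp; omega
  · rintro (⟨h1, h2 | h2⟩ | h | h)
    · exact ⟨by intro he; rw [Prod.mk.injEq] at he; omega,
        Or.inl (Or.inl ⟨h1.symm, h2.symm⟩)⟩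
    · exact ⟨by intro he; rw [Prod.mk.injEq] at he; omega,
        Or.inr (Or.inl ⟨h1, h2⟩)⟩
    · rw [Prod.mk.injEq] at h
      obtain ⟨h1, h2⟩ := h
      refine ⟨?_, ?_⟩
      · intro he; rw [Prod.mk.injEq] at he
        exact one_ne hm (by linear_combination he.1.symm - h1)
      · by_cases hi : i = -1
        · refine Or.inl (Or.inr (Or.inr ⟨hi, by rw [h1, hi]; ring, ?_⟩))
          rw [h2, fr, if_pos hi, sig]; simp; omega
        · refine Or.inl (Or.inr (Or.inl ⟨hi, by rw [h1], ?_⟩))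
          rw [h2, fr, if_neg hi]
    · rw [Prod.mk.injEq] at h
      obtain ⟨h1, h2⟩ := h
      refine ⟨?_, ?_⟩
      · intro he; rw [Prod.mk.injEq] at he
        exact one_ne hm (by linear_combination h1 - he.1.symm)
      · by_cases hi : i = 0
        · refine Or.inr (Or.inr (Or.inr ⟨by rw [h1, hi]; ring, hi, ?_⟩))
          rw [h2, br, if_pos hi, sig]; simp; omega
        · refine Or.inr (Or.inr (Or.inl ⟨?_, by rw [h1]; ring, ?_⟩))
          · rw [h1]; intro he
            exact hi (by linear_combination he)
          · rw [h2, br, if_neg hi]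

end prelim
-- continuing in same namespace context; will concatenate later
section deg
variable {m n : ℕ}

lemma ncard3 {α : Type*} {a b c : α} (hab : a ≠ b) (hac : a ≠ c) (hbc : b ≠ c) :
    ({a, b, c} : Set α).ncard = 3 := by
  rw [Set.ncard_insert_of_notMem (by simp [hab, hac]) (Set.toFinite _),
    Set.ncard_pair hbc]

lemma ncard4 {α : Type*} {a b c d : α} (hab : a ≠ b) (hac : a ≠ c) (had : a ≠ d)
    (hbc : b ≠ c) (hbd : b ≠ d) (hcd : c ≠ d) : ({a, b, c, d} : Set α).ncard = 4 := by
  rw [Set.ncard_insert_of_notMem (by simp [hab, hac, had]) (Set.toFinite _),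
    ncard3 hbc hbd hcd]

lemma col_ne1 (hm : 4 ≤ m) (i : ZMod (m-1)) : i + 1 ≠ i :=
  fun h => one_ne hm (by linear_combination h)

lemma col_ne2 (hm : 4 ≤ m) (i : ZMod (m-1)) : i - 1 ≠ i :=
  fun h => one_ne hm (by linear_combination -h)

lemma col_ne3 (hm : 4 ≤ m) (i : ZMod (m-1)) : i + 1 ≠ i - 1 :=
  fun h => two_ne hm (by linear_combination h)

lemma nbhd_bot (hm : 4 ≤ m) (hn : 4 ≤ n) (i : ZMod (m-1)) (j : Fin n) (hj : j.val = 0) :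
    (GML m n).neighborSet (i, j) =
      {(i, ⟨1, by omega⟩), (i + 1, fr i j), (i - 1, br i j)} := by
  ext w
  rw [mem_nbhd hm]
  simp only [Set.mem_insert_iff, Set.mem_singleton_iff]
  constructor
  · rintro (⟨h1, h2 | h2⟩ | h | h)
    · exact Or.inl (Prod.ext h1 (Fin.ext (by show w.2.val = 1; omega)))
    · omega
    · exact Or.inr (Or.inl h)
    · exact Or.inr (Or.inr h)
  · rintro (rfl | h | h)
    · exact Or.inl ⟨rfl, Or.inl (show (1:ℕ) = j.val + 1 by omega)⟩
    · exact Or.inr (Or.inl h)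
    · exact Or.inr (Or.inr h)

lemma nbhd_top (hm : 4 ≤ m) (hn : 4 ≤ n) (i : ZMod (m-1)) (j : Fin n) (hj : j.val = n - 1) :
    (GML m n).neighborSet (i, j) =
      {(i, ⟨n - 2, by omega⟩), (i + 1, fr i j), (i - 1, br i j)} := by
  ext w
  rw [mem_nbhd hm]
  simp only [Set.mem_insert_iff, Set.mem_singleton_iff]
  constructor
  · rintro (⟨h1, h2 | h2⟩ | h | h)
    · exact absurd h2 (by omega)
    · exact Or.inl (Prod.ext h1 (Fin.ext (by show w.2.val = n - 2; omega)))
    · exact Or.inr (Or.inl h)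
    · exact Or.inr (Or.inr h)
  · rintro (rfl | h | h)
    · exact Or.inl ⟨rfl, Or.inr (show (n-2:ℕ) + 1 = j.val by omega)⟩
    · exact Or.inr (Or.inl h)
    · exact Or.inr (Or.inr h)

lemma nbhd_mid (hm : 4 ≤ m) (hn : 4 ≤ n) (i : ZMod (m-1)) (j : Fin n)
    (hj0 : j.val ≠ 0) (hj1 : j.val ≠ n - 1) :
    (GML m n).neighborSet (i, j) =
      {(i, ⟨j.val + 1, by omega⟩), (i, ⟨j.val - 1, by omega⟩),
        (i + 1, fr i j), (i - 1, br i j)} := by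
  ext w
  rw [mem_nbhd hm]
  simp only [Set.mem_insert_iff, Set.mem_singleton_iff]
  constructor
  · rintro (⟨h1, h2 | h2⟩ | h | h)
    · exact Or.inl (Prod.ext h1 (Fin.ext (by show w.2.val = j.val + 1; omega)))
    · exact Or.inr (Or.inl (Prod.ext h1 (Fin.ext (by show w.2.val = j.val - 1; omega))))
    · exact Or.inr (Or.inr (Or.inl h))
    · exact Or.inr (Or.inr (Or.inr h))
  · rintro (rfl | rfl | h | h)
    · exact Or.inl ⟨rfl, Or.inl rfl⟩
    · exact Or.inl ⟨rfl, Or.inr (show j.val - 1 + 1 = j.val by omega)⟩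
    · exact Or.inr (Or.inl h)
    · exact Or.inr (Or.inr h)

lemma deg_bd (hm : 4 ≤ m) (hn : 4 ≤ n) (i : ZMod (m-1)) (j : Fin n)
    (hj : j.val = 0 ∨ j.val = n - 1) : ndeg (GML m n) (i, j) = 3 := by
  have hc1 := col_ne1 hm i
  have hc2 := col_ne2 hm i
  have hc3 := col_ne3 hm i
  rcases hj with hj | hj
  · rw [ndeg, nbhd_bot hm hn i j hj]
    exact ncard3 (fun h => hc1 (congrArg Prod.fst h).symm)
      (fun h => hc2 (congrArg Prod.fst h).symm)
      (fun h => hc3 (congrArg Prod.fst h))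
  · rw [ndeg, nbhd_top hm hn i j hj]
    exact ncard3 (fun h => hc1 (congrArg Prod.fst h).symm)
      (fun h => hc2 (congrArg Prod.fst h).symm)
      (fun h => hc3 (congrArg Prod.fst h))

lemma deg_int (hm : 4 ≤ m) (hn : 4 ≤ n) (i : ZMod (m-1)) (j : Fin n)
    (hj0 : j.val ≠ 0) (hj1 : j.val ≠ n - 1) : ndeg (GML m n) (i, j) = 4 := by
  have hc1 := col_ne1 hm i
  have hc2 := col_ne2 hm i
  have hc3 := col_ne3 hm i
  rw [ndeg, nbhd_mid hm hn i j hj0 hj1]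
  refine ncard4 ?_ (fun h => hc1 (congrArg Prod.fst h).symm)
    (fun h => hc2 (congrArg Prod.fst h).symm)
    (fun h => hc1 (congrArg Prod.fst h).symm)
    (fun h => hc2 (congrArg Prod.fst h).symm)
    (fun h => hc3 (congrArg Prod.fst h))
  intro h
  have := (congrArg (fun p => (Prod.snd p).val) h)
  simp at this
  omega

end deg
section linedeg
open SimpleGraph

lemma ndeg_line {V : Type*} [Finite V] {G : SimpleGraph V} {u v : V} (h : G.Adj u v) :
    ndeg G.lineGraph ⟨s(u,v), G.mem_edgeSet.2 h⟩ = ndeg G u + ndeg G v - 2 := by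
  have key : Subtype.val '' (G.lineGraph.neighborSet ⟨s(u,v), G.mem_edgeSet.2 h⟩) =
      (fun x => s(u,x)) '' (G.neighborSet u \ {v}) ∪
      (fun y => s(v,y)) '' (G.neighborSet v \ {u}) := by
    ext z
    simp only [Set.mem_image, Set.mem_union, Set.mem_diff, Set.mem_singleton_iff]
    constructor
    · rintro ⟨⟨e, he⟩, hadj, rfl⟩
      rw [mem_neighborSet, lineGraph_adj_iff_exists] at hadj
      obtain ⟨hne, w, hw1, hw2⟩ := hadj
      simp only [ne_eq, Subtype.mk.injEq] at hne hw1 hw2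
      rw [Sym2.mem_iff] at hw1
      have hne' : e ≠ s(u,v) := fun hh => hne hh.symm
      rcases hw1 with rfl | rfl
      · obtain ⟨x, rfl⟩ := Sym2.mem_iff_exists.1 hw2
        refine Or.inl ⟨x, ⟨⟨G.mem_edgeSet.1 he, ?_⟩, rfl⟩⟩
        intro hx; rw [hx] at hne'; exact hne' rfl
      · obtain ⟨y, rfl⟩ := Sym2.mem_iff_exists.1 hw2
        refine Or.inr ⟨y, ⟨⟨G.mem_edgeSet.1 he, ?_⟩, rfl⟩⟩
        intro hy; rw [hy] at hne'
        exact hne' (Sym2.eq_swap)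
    · rintro (⟨x, ⟨hx, hxv⟩, rfl⟩ | ⟨y, ⟨hy, hyu⟩, rfl⟩)
      · refine ⟨⟨s(u,x), G.mem_edgeSet.2 hx⟩, ?_, rfl⟩
        rw [mem_neighborSet, lineGraph_adj_iff_exists]
        refine ⟨?_, u, Sym2.mem_mk_left u v, Sym2.mem_mk_left u x⟩
        intro hh
        rw [Subtype.mk.injEq] at hh
        simp only [Sym2.eq, Sym2.rel_iff', Prod.mk.injEq, Prod.swap_prod_mk] at hh
        rcases hh with ⟨h1, h2⟩ | ⟨h1, h2⟩
        · exact hxv h2.symm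
        · exact G.ne_of_adj h h2.symm
      · refine ⟨⟨s(v,y), G.mem_edgeSet.2 hy⟩, ?_, rfl⟩
        rw [mem_neighborSet, lineGraph_adj_iff_exists]
        refine ⟨?_, v, Sym2.mem_mk_right u v, Sym2.mem_mk_left v y⟩
        intro hh
        rw [Subtype.mk.injEq] at hh
        simp only [Sym2.eq, Sym2.rel_iff', Prod.mk.injEq, Prod.swap_prod_mk] at hh
        rcases hh with ⟨h1, h2⟩ | hh2
        · exact G.ne_of_adj h h1
        · exact hyu hh2.1.symm
  have inj1 : Set.InjOn (fun x => s(u,x)) (G.neighborSet u \ {v}) := by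
    intro a ha b hb hab
    simp only [Sym2.eq, Sym2.rel_iff', Prod.mk.injEq, Prod.swap_prod_mk] at hab
    rcases hab with hab | hab
    · exact hab.2
    · exact absurd hab.2 (G.ne_of_adj ha.1).symm
  have inj2 : Set.InjOn (fun y => s(v,y)) (G.neighborSet v \ {u}) := by
    intro a ha b hb hab
    simp only [Sym2.eq, Sym2.rel_iff', Prod.mk.injEq, Prod.swap_prod_mk] at hab
    rcases hab with hab | hab
    · exact hab.2
    · exact absurd hab.2 (G.ne_of_adj ha.1).symm
  have hdisj : Disjoint ((fun x => s(u,x)) '' (G.neighborSet u \ {v}))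
      ((fun y => s(v,y)) '' (G.neighborSet v \ {u})) := by
    rw [Set.disjoint_left]
    rintro z ⟨x, ⟨hx, hxv⟩, rfl⟩ ⟨y, ⟨hy, hyu⟩, hz⟩
    simp only [Sym2.eq, Sym2.rel_iff', Prod.mk.injEq, Prod.swap_prod_mk] at hz
    rcases hz with hz | hz
    · exact G.ne_of_adj h hz.1.symm
    · exact hyu (Set.mem_singleton_iff.2 hz.2)
  have h1 : (G.neighborSet u \ {v}).ncard = ndeg G u - 1 := by
    rw [ndeg, Set.ncard_diff_singleton_of_mem ((G.mem_neighborSet _ _).2 h)]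
  have h2 : (G.neighborSet v \ {u}).ncard = ndeg G v - 1 := by
    rw [ndeg, Set.ncard_diff_singleton_of_mem ((G.mem_neighborSet _ _).2 h.symm)]
  have hu1 : 1 ≤ ndeg G u := by
    rw [ndeg]
    exact (Set.ncard_pos (Set.toFinite _)).2 ⟨v, (G.mem_neighborSet _ _).2 h⟩
  have hv1 : 1 ≤ ndeg G v := by
    rw [ndeg]
    exact (Set.ncard_pos (Set.toFinite _)).2 ⟨u, (G.mem_neighborSet _ _).2 h.symm⟩
  have := congrArg Set.ncard key
  rw [Set.ncard_image_of_injective _ Subtype.val_injective,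
    Set.ncard_union_eq hdisj (Set.toFinite _) (Set.toFinite _),
    Set.ncard_image_of_injOn inj1, Set.ncard_image_of_injOn inj2, h1, h2] at this
  rw [ndeg]
  omega

end linedeg
/-- boundary row -/
def bd {n : ℕ} (j : Fin n) : Prop := j.val = 0 ∨ j.val = n - 1

instance {n : ℕ} (j : Fin n) : Decidable (bd j) := by unfold bd; infer_instance

section classif
variable {m n : ℕ}

lemma bd_sig {j : Fin n} : bd (sig j) ↔ bd j := by
  have := j.isLt
  simp only [bd, sig]
  omega

lemma deg_eq (hm : 4 ≤ m) (hn : 4 ≤ n) (u : ZMod (m-1) × Fin n) :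
    ndeg (GML m n) u = if bd u.2 then 3 else 4 := by
  obtain ⟨i, j⟩ := u
  by_cases hb : bd j
  · rw [if_pos hb]; exact deg_bd hm hn i j hb
  · rw [if_neg hb]
    rw [bd, not_or] at hb
    exact deg_int hm hn i j hb.1 hb.2

lemma deg_line_val (hm : 4 ≤ m) (hn : 4 ≤ n) {u v : ZMod (m-1) × Fin n}
    (h : (GML m n).Adj u v) :
    ndeg (GML m n).lineGraph ⟨s(u,v), (GML m n).mem_edgeSet.2 h⟩ =
      (if bd u.2 then 3 else 4) + (if bd v.2 then 3 else 4) - 2 := by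
  haveI : NeZero (m-1) := ⟨by omega⟩
  rw [ndeg_line h, deg_eq hm hn u, deg_eq hm hn v]

lemma class4 (hm : 4 ≤ m) (hn : 4 ≤ n) {u v : ZMod (m-1) × Fin n}
    (h : (GML m n).Adj u v) :
    ndeg (GML m n).lineGraph ⟨s(u,v), (GML m n).mem_edgeSet.2 h⟩ = 4 ↔
      (bd u.2 ∧ bd v.2) := by
  rw [deg_line_val hm hn h]
  by_cases h1 : bd u.2 <;> by_cases h2 : bd v.2 <;> simp [h1, h2]

lemma class5 (hm : 4 ≤ m) (hn : 4 ≤ n) {u v : ZMod (m-1) × Fin n}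
    (h : (GML m n).Adj u v) :
    ndeg (GML m n).lineGraph ⟨s(u,v), (GML m n).mem_edgeSet.2 h⟩ = 5 ↔
      ((bd u.2 ∧ ¬ bd v.2) ∨ (¬ bd u.2 ∧ bd v.2)) := by
  rw [deg_line_val hm hn h]
  by_cases h1 : bd u.2 <;> by_cases h2 : bd v.2 <;> simp [h1, h2]

/-- a horizontal edge has both rows boundary or both interior -/
lemma horiz_parity (hm : 4 ≤ m) {u v : ZMod (m-1) × Fin n}
    (h : (GML m n).Adj u v) (hc : u.1 ≠ v.1) : (bd u.2 ↔ bd v.2) := by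
  obtain ⟨i, j⟩ := u
  have hv : v ∈ (GML m n).neighborSet (i, j) := h
  rw [mem_nbhd hm] at hv
  rcases hv with ⟨h1, _⟩ | rfl | rfl
  · exact absurd h1.symm hc
  · simp only [fr]
    split_ifs
    · exact bd_sig.symm
    · rfl
  · simp only [br]
    split_ifs
    · exact bd_sig.symm
    · rfl

/-- an edge with one boundary, one interior endpoint is vertical -/
lemma vert_of_mixed (hm : 4 ≤ m) {u v : ZMod (m-1) × Fin n}
    (h : (GML m n).Adj u v) (hx : ¬ (bd u.2 ↔ bd v.2)) :
    u.1 = v.1 ∧ (v.2.val = u.2.val + 1 ∨ u.2.val = v.2.val + 1) := by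
  by_cases hc : u.1 = v.1
  · refine ⟨hc, ?_⟩
    obtain ⟨i, j⟩ := u
    have hv : v ∈ (GML m n).neighborSet (i, j) := h
    rw [mem_nbhd hm] at hv
    rcases hv with ⟨h1, h2⟩ | rfl | rfl
    · rcases h2 with h2 | h2
      · exact Or.inl h2
      · exact Or.inr h2.symm
    · exact absurd hc (col_ne1 hm i).symm
    · exact absurd hc (col_ne2 hm i).symm
  · exact absurd (horiz_parity hm h hc) hx

end classif
section gadgets
variable {m n : ℕ}

lemma adj_vert (hm : 4 ≤ m) (i : ZMod (m-1)) (j j' : Fin n) (hj : j'.val = j.val + 1) :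
    (GML m n).Adj (i,j) (i,j') :=
  ((GML m n).mem_neighborSet _ _).1 ((mem_nbhd hm i j (i,j')).2 (Or.inl ⟨rfl, Or.inl hj⟩))

lemma adj_fwd (hm : 4 ≤ m) (i : ZMod (m-1)) (j : Fin n) :
    (GML m n).Adj (i,j) (i+1, fr i j) :=
  ((GML m n).mem_neighborSet _ _).1 ((mem_nbhd hm i j _).2 (Or.inr (Or.inl rfl)))

lemma adj_bwd (hm : 4 ≤ m) (i : ZMod (m-1)) (j : Fin n) :
    (GML m n).Adj (i,j) (i-1, br i j) :=
  ((GML m n).mem_neighborSet _ _).1 ((mem_nbhd hm i j _).2 (Or.inr (Or.inr rfl)))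

/-- the boundary row (top / bottom) -/
def brow (n : ℕ) (hn : 4 ≤ n) (t : Bool) : Fin n :=
  if t then ⟨0, by omega⟩ else ⟨n-1, by omega⟩
/-- the interior row next to the boundary row -/
def irow (n : ℕ) (hn : 4 ≤ n) (t : Bool) : Fin n :=
  if t then ⟨1, by omega⟩ else ⟨n-2, by omega⟩

lemma bd_brow (hn : 4 ≤ n) (t : Bool) : bd (brow n hn t) := by
  cases t <;> simp [brow, bd] <;> omega

lemma nbd_irow (hn : 4 ≤ n) (t : Bool) : ¬ bd (irow n hn t) := by
  cases t <;> simp [irow, bd] <;> omega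

lemma adj_vE (hm : 4 ≤ m) (hn : 4 ≤ n) (i : ZMod (m-1)) (t : Bool) :
    (GML m n).Adj (i, brow n hn t) (i, irow n hn t) := by
  cases t
  · exact (adj_vert hm i _ _ (by simp [brow, irow]; omega)).symm
  · exact adj_vert hm i _ _ (by simp [brow, irow])

/-- vertical boundary edge -/
def vE (hm : 4 ≤ m) (hn : 4 ≤ n) (i : ZMod (m-1)) (t : Bool) : (GML m n).edgeSet :=
  ⟨s((i, brow n hn t), (i, irow n hn t)), (GML m n).mem_edgeSet.2 (adj_vE hm hn i t)⟩

/-- horizontal boundary edge -/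
def hE (hm : 4 ≤ m) (hn : 4 ≤ n) (i : ZMod (m-1)) (t d : Bool) : (GML m n).edgeSet :=
  if d then
    ⟨s((i, brow n hn t), (i+1, fr i (brow n hn t))),
      (GML m n).mem_edgeSet.2 (adj_fwd hm i _)⟩
  else
    ⟨s((i, brow n hn t), (i-1, br i (brow n hn t))),
      (GML m n).mem_edgeSet.2 (adj_bwd hm i _)⟩

def FF (hm : 4 ≤ m) (hn : 4 ≤ n) (p : ZMod (m-1) × Bool × Bool) :
    Sym2 (GML m n).edgeSet :=
  s(vE hm hn p.1 p.2.1, hE hm hn p.1 p.2.1 p.2.2)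

lemma bd_fr (hn : 4 ≤ n) {j : Fin n} (hj : bd j) (i : ZMod (m-1)) : bd (fr i j) := by
  rw [fr]; split_ifs
  · exact bd_sig.2 hj
  · exact hj

lemma bd_br (hn : 4 ≤ n) {j : Fin n} (hj : bd j) (i : ZMod (m-1)) : bd (br i j) := by
  rw [br]; split_ifs
  · exact bd_sig.2 hj
  · exact hj

lemma ndeg_hE (hm : 4 ≤ m) (hn : 4 ≤ n) (i : ZMod (m-1)) (t d : Bool) :
    ndeg (GML m n).lineGraph (hE hm hn i t d) = 4 := by
  cases d
  · exact (class4 hm hn (adj_bwd hm i _)).2 ⟨bd_brow hn t, bd_br hn (bd_brow hn t) i⟩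
  · exact (class4 hm hn (adj_fwd hm i _)).2 ⟨bd_brow hn t, bd_fr hn (bd_brow hn t) i⟩

lemma ndeg_vE (hm : 4 ≤ m) (hn : 4 ≤ n) (i : ZMod (m-1)) (t : Bool) :
    ndeg (GML m n).lineGraph (vE hm hn i t) = 5 := by
  exact (class5 hm hn (adj_vE hm hn i t)).2 (Or.inl ⟨bd_brow hn t, nbd_irow hn t⟩)

lemma vE_ne_hE (hm : 4 ≤ m) (hn : 4 ≤ n) (i i' : ZMod (m-1)) (t t' d : Bool) :
    vE hm hn i t ≠ hE hm hn i' t' d := by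
  intro h
  apply_fun (Subtype.val) at h
  cases d <;>
  · simp only [vE, hE, if_true, if_false, Bool.false_eq_true, Sym2.eq, Sym2.rel_iff',
      Prod.mk.injEq, Prod.swap_prod_mk] at h
    rcases h with ⟨⟨h1, _⟩, ⟨h2, _⟩⟩ | ⟨⟨h1, _⟩, ⟨h2, _⟩⟩ <;>
    · rw [h1] at h2
      first
        | exact col_ne1 hm i' h2.symm
        | exact col_ne2 hm i' h2.symm
        | exact col_ne1 hm i' h2
        | exact col_ne2 hm i' h2

lemma lineAdj_vh (hm : 4 ≤ m) (hn : 4 ≤ n) (i : ZMod (m-1)) (t d : Bool) :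
    (GML m n).lineGraph.Adj (vE hm hn i t) (hE hm hn i t d) := by
  rw [SimpleGraph.lineGraph_adj_iff_exists]
  refine ⟨vE_ne_hE hm hn i i t t d, (i, brow n hn t), ?_, ?_⟩
  · exact Sym2.mem_mk_left _ _
  · cases d <;> exact Sym2.mem_mk_left _ _

end gadgets
section final
variable {m n : ℕ}

lemma brow_inj (hn : 4 ≤ n) {t t' : Bool} (h : brow n hn t = brow n hn t') : t = t' := by
  cases t <;> cases t' <;> simp_all [brow] <;> omega

lemma vE_inj (hm : 4 ≤ m) (hn : 4 ≤ n) {i i' : ZMod (m-1)} {t t' : Bool}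
    (h : vE hm hn i t = vE hm hn i' t') : i = i' ∧ t = t' := by
  apply_fun Subtype.val at h
  simp only [vE, Sym2.eq, Sym2.rel_iff', Prod.mk.injEq, Prod.swap_prod_mk] at h
  rcases h with ⟨⟨h1, h2⟩, _⟩ | ⟨⟨h1, h2⟩, _⟩
  · exact ⟨h1, brow_inj hn h2⟩
  · exact absurd (h2 ▸ bd_brow hn t) (nbd_irow hn t')

lemma hE_inj_d (hm : 4 ≤ m) (hn : 4 ≤ n) {i : ZMod (m-1)} {t d d' : Bool}
    (h : hE hm hn i t d = hE hm hn i t d') : d = d' := by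
  by_contra hdd
  apply_fun Subtype.val at h
  have : d = !d' := by cases d <;> cases d' <;> simp_all
  subst this
  cases d' <;>
  · simp only [hE, Bool.not_true, Bool.not_false, if_true, if_false, Bool.false_eq_true,
      Sym2.eq, Sym2.rel_iff', Prod.mk.injEq, Prod.swap_prod_mk] at h
    rcases h with ⟨⟨_, _⟩, ⟨h2, _⟩⟩ | ⟨⟨h1, _⟩, ⟨h2, _⟩⟩
    · first
        | exact col_ne3 hm i h2
        | exact col_ne3 hm i h2.symm
    · first
        | exact col_ne1 hm i h1
        | exact col_ne2 hm i h1
        | exact col_ne1 hm i h2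
        | exact col_ne2 hm i h2

lemma FF_inj (hm : 4 ≤ m) (hn : 4 ≤ n) : Function.Injective (FF hm hn) := by
  rintro ⟨i, t, d⟩ ⟨i', t', d'⟩ h
  simp only [FF, Sym2.eq, Sym2.rel_iff', Prod.mk.injEq, Prod.swap_prod_mk] at h
  rcases h with ⟨h1, h2⟩ | ⟨h1, h2⟩
  · obtain ⟨rfl, rfl⟩ := vE_inj hm hn h1
    obtain rfl := hE_inj_d hm hn h2
    rfl
  · exact absurd h1 (vE_ne_hE hm hn i i' t t' d')

lemma key_final (hm : 4 ≤ m) (hn : 4 ≤ n) {u x : ZMod (m-1) × Fin n}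
    (hadj : (GML m n).Adj u x) (hbu : bd u.2) (hbx : bd x.2)
    {ι : ZMod (m-1)} {a b : Fin n} (hab : b.val = a.val + 1)
    (hvadj : (GML m n).Adj (ι,a) (ι,b))
    (hw : u = (ι,a) ∨ u = (ι,b)) :
    s((⟨s(u,x), (GML m n).mem_edgeSet.2 hadj⟩ : (GML m n).edgeSet),
      (⟨s((ι,a),(ι,b)), (GML m n).mem_edgeSet.2 hvadj⟩ : (GML m n).edgeSet)) ∈
      Set.range (FF hm hn) := by
  have hblt := b.isLt
  rcases hw with rfl | rfl
  · -- u = (ι, a) : top edge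
    have hbu' : bd a := hbu
    have ha0 : a.val = 0 := by
      rcases hbu' with h | h
      · exact h
      · exfalso; omega
    have hA : a = brow n hn true := Fin.ext (by simpa [brow] using ha0)
    have hB : b = irow n hn true := Fin.ext (by simp [irow]; omega)
    have hx : x ∈ (GML m n).neighborSet (ι, a) := hadj
    rw [mem_nbhd hm] at hx
    rcases hx with ⟨h1, h2 | h2⟩ | rfl | rfl
    · exfalso
      rcases hbx with h | h <;> omega
    · exfalso; omega
    · -- forward horizontal : d = true
      refine ⟨(ι, true, true), ?_⟩
      subst hA; subst hB
      show s(vE hm hn ι true, hE hm hn ι true true) = _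
      rw [Sym2.eq_swap]
      rfl
    · refine ⟨(ι, true, false), ?_⟩
      subst hA; subst hB
      show s(vE hm hn ι true, hE hm hn ι true false) = _
      rw [Sym2.eq_swap]
      rfl
  · -- u = (ι, b) : bottom edge
    have hbu' : bd b := hbu
    have hb1 : b.val = n - 1 := by
      rcases hbu' with h | h
      · exfalso; omega
      · exact h
    have hB : b = brow n hn false := Fin.ext (by simp [brow]; omega)
    have hA : a = irow n hn false := Fin.ext (by simp [irow]; omega)
    have hx : x ∈ (GML m n).neighborSet (ι, b) := hadj
    rw [mem_nbhd hm] at hx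
    rcases hx with ⟨h1, h2 | h2⟩ | rfl | rfl
    · exfalso; omega
    · exfalso
      rcases hbx with h | h <;> omega
    · refine ⟨(ι, false, true), ?_⟩
      subst hB; subst hA
      show s(vE hm hn ι false, hE hm hn ι false true) = _
      rw [Sym2.eq_swap]
      exact congrArg (fun e => s(hE hm hn ι false true, e)) (Subtype.ext (by exact Sym2.eq_swap) : vE hm hn ι false = ⟨s((ι, irow n hn false), (ι, brow n hn false)), (GML m n).mem_edgeSet.2 hvadj⟩)
    · refine ⟨(ι, false, false), ?_⟩
      subst hB; subst hA
      show s(vE hm hn ι false, hE hm hn ι false false) = _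
      rw [Sym2.eq_swap]
      exact congrArg (fun e => s(hE hm hn ι false false, e)) (Subtype.ext (by exact Sym2.eq_swap) : vE hm hn ι false = ⟨s((ι, irow n hn false), (ι, brow n hn false)), (GML m n).mem_edgeSet.2 hvadj⟩)

end final
section main
variable {m n : ℕ}

lemma S_sub (hm : 4 ≤ m) (hn : 4 ≤ n) (u₁ u₂ w₁ w₂ : ZMod (m-1) × Fin n)
    (hev : s(u₁,u₂) ∈ (GML m n).edgeSet) (hfv : s(w₁,w₂) ∈ (GML m n).edgeSet)
    (hadjL : (GML m n).lineGraph.Adj ⟨s(u₁,u₂),hev⟩ ⟨s(w₁,w₂),hfv⟩)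
    (h4 : ndeg (GML m n).lineGraph ⟨s(u₁,u₂),hev⟩ = 4)
    (h5 : ndeg (GML m n).lineGraph ⟨s(w₁,w₂),hfv⟩ = 5) :
    s((⟨s(u₁,u₂),hev⟩ : (GML m n).edgeSet), (⟨s(w₁,w₂),hfv⟩ : (GML m n).edgeSet)) ∈
      Set.range (FF hm hn) := by
  have he : (GML m n).Adj u₁ u₂ := (GML m n).mem_edgeSet.1 hev
  have hf : (GML m n).Adj w₁ w₂ := (GML m n).mem_edgeSet.1 hfv
  have hb := (class4 hm hn he).1 h4
  have hmix := (class5 hm hn hf).1 h5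
  obtain ⟨hcol, hrow⟩ := vert_of_mixed hm hf (by rcases hmix with ⟨h1,h2⟩|⟨h1,h2⟩ <;> tauto)
  rw [SimpleGraph.lineGraph_adj_iff_exists] at hadjL
  obtain ⟨hne, w, hw1, hw2⟩ := hadjL
  simp only [Sym2.mem_iff] at hw1 hw2
  obtain ⟨ι1, a1⟩ := w₁
  obtain ⟨ι2, b2⟩ := w₂
  have hcc : ι1 = ι2 := hcol
  subst hcc
  rcases hrow with hA | hB
  · rcases hw1 with h1 | h1 <;> rw [h1] at hw2
    · exact key_final hm hn he hb.1 hb.2 hA hf hw2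
    · have hsw : (⟨s(u₁,u₂),hev⟩ : (GML m n).edgeSet) =
          ⟨s(u₂,u₁), (GML m n).mem_edgeSet.2 he.symm⟩ := Subtype.ext (by exact Sym2.eq_swap)
      rw [hsw]
      exact key_final hm hn he.symm hb.2 hb.1 hA hf hw2
  · have hsw2 : (⟨s((ι1,a1),(ι1,b2)),hfv⟩ : (GML m n).edgeSet) =
        ⟨s((ι1,b2),(ι1,a1)), (GML m n).mem_edgeSet.2 hf.symm⟩ :=
      Subtype.ext (by exact Sym2.eq_swap)
    rw [hsw2]
    rcases hw1 with h1 | h1 <;> rw [h1] at hw2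
    · exact key_final hm hn he hb.1 hb.2 hB hf.symm hw2.symm
    · have hsw : (⟨s(u₁,u₂),hev⟩ : (GML m n).edgeSet) =
          ⟨s(u₂,u₁), (GML m n).mem_edgeSet.2 he.symm⟩ := Subtype.ext (by exact Sym2.eq_swap)
      rw [hsw]
      exact key_final hm hn he.symm hb.2 hb.1 hB hf.symm hw2.symm

end main

/-- In `L(M_{m,n})` (`m, n ≥ 4`), the number of edges with one endpoint of degree 4 and the other of degree 5 equals `4(m−1)`. -/
theorem gml_line_edges_45 (m n : ℕ) (hm : 4 ≤ m) (hn : 4 ≤ n) :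
    ({E | E ∈ ((GML m n).lineGraph).edgeSet ∧ ∃ e f, E = s(e, f) ∧ ndeg (GML m n).lineGraph e = 4 ∧ ndeg (GML m n).lineGraph f = 5}.ncard : ℤ) = 4 * ((m : ℤ) - 1) := by
  haveI : NeZero (m-1) := ⟨by omega⟩
  have hS : {E | E ∈ ((GML m n).lineGraph).edgeSet ∧ ∃ e f, E = s(e, f) ∧
      ndeg (GML m n).lineGraph e = 4 ∧ ndeg (GML m n).lineGraph f = 5} =
      Set.range (FF hm hn) := by
    ext E
    simp only [Set.mem_setOf_eq]
    constructor
    · rintro ⟨hmem, ⟨ev, hev⟩, ⟨fv, hfv⟩, rfl, h4, h5⟩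
      rw [SimpleGraph.mem_edgeSet] at hmem
      revert hev hfv
      induction ev using Sym2.ind with | _ u₁ u₂ => ?_
      induction fv using Sym2.ind with | _ w₁ w₂ => ?_
      intro hev hfv hmem h4 h5
      exact S_sub hm hn u₁ u₂ w₁ w₂ hev hfv hmem h4 h5
    · rintro ⟨⟨i, t, d⟩, rfl⟩
      refine ⟨?_, hE hm hn i t d, vE hm hn i t, ?_, ndeg_hE hm hn i t d, ndeg_vE hm hn i t⟩
      · exact (GML m n).lineGraph.mem_edgeSet.2 (lineAdj_vh hm hn i t d)
      · exact Sym2.eq_swap.symm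
  rw [hS, ← Set.image_univ, Set.ncard_image_of_injective _ (FF_inj hm hn), Set.ncard_univ,
    Nat.card_eq_fintype_card, Fintype.card_prod, Fintype.card_prod, ZMod.card,
    Fintype.card_bool]
  push_cast [Nat.cast_sub (by omega : 1 ≤ m)]
  ring
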